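/- Let m ≥ 1 be an integer and let H be a subharmonic real-valued homogeneous polynomial of degree 2m containing no harmonic terms with ‖H‖ = 1. Let η_n ∈ M_H with η_n → (0,0), η_{n,1} ≠ 0 for all n, and ε(η_n)/|η_{n,1}|^{2m} → 0. Suppose there exist integers j₀, q₀ ≥ 1 with j₀ + q₀ < 2m and constants c, C > 0 such that c|η_{n,1}|^{2m−j₀−q₀} ≤ |H_{j₀,q̄₀}(η_{n,1})| ≤ C|η_{n,1}|^{2m−j₀−q₀} for all n. Then τ(η_n)/ε(η_n)^{1/(2m)} → 0 as n → ∞; in particular, for every j with 1 ≤ j ≤ 2m−1 the degree-2m coefficient a_{2m−j} τ(η_n)^{2m}/ε(η_n) of the rescaled polynomial H_{η_n} tends to 0. -/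

import Mathlib

open Complex Finset Metric Filter Topology Asymptotics
open scoped ENNReal NNReal

noncomputable section

/-- `Hpoly m a z = Σ_{j=1}^{2m-1} a_{2m-j} z^j conj(z)^{2m-j}`. -/
def Hpoly (m : ℕ) (a : ℕ → ℂ) (z : ℂ) : ℂ :=
  ∑ j ∈ Finset.Icc 1 (2 * m - 1), a (2 * m - j) * z ^ j * (starRingEnd ℂ z) ^ (2 * m - j)

/-- The coefficients `a` give a real-valued polynomial that is not identically zero. -/
def GoodCoeff (m : ℕ) (a : ℕ → ℂ) : Prop :=
  (∀ j ∈ Finset.Icc 1 (2 * m - 1), a j = starRingEnd ℂ (a (2 * m - j))) ∧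
  (∃ j ∈ Finset.Icc 1 (2 * m - 1), a j ≠ 0)

/-- Subharmonicity: the Laplacian is a nonnegative real number at every point. -/
def SubharmonicCoeff (m : ℕ) (a : ℕ → ℂ) : Prop :=
  ∀ z : ℂ,
    ((4 : ℂ) * ∑ j ∈ Finset.Icc 1 (2 * m - 1),
      (j : ℂ) * ((2 * m - j : ℕ) : ℂ) * a (2 * m - j) * z ^ (j - 1) *
        (starRingEnd ℂ z) ^ (2 * m - j - 1)).im = 0 ∧
    0 ≤ ((4 : ℂ) * ∑ j ∈ Finset.Icc 1 (2 * m - 1),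
      (j : ℂ) * ((2 * m - j : ℕ) : ℂ) * a (2 * m - j) * z ^ (j - 1) *
        (starRingEnd ℂ z) ^ (2 * m - j - 1)).re

/-- The model domain `M_H`. -/
def modelM (H : ℂ → ℝ) : Set (ℂ × ℂ) := {z : ℂ × ℂ | z.2.re + H z.1 < 0}

/-- The tube domain `Ω_m`. -/
def OmegaM (m : ℕ) : Set (ℂ × ℂ) := {z : ℂ × ℂ | z.2.re + z.1.re ^ (2 * m) < 0}

/-- `f` is a biholomorphism from `Ω₁` onto `Ω₂`. -/
def IsBiholoOn (Ω₁ Ω₂ : Set (ℂ × ℂ)) (f : ℂ × ℂ → ℂ × ℂ) : Prop :=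
  DifferentiableOn ℂ f Ω₁ ∧ Set.MapsTo f Ω₁ Ω₂ ∧
    ∃ g : ℂ × ℂ → ℂ × ℂ, DifferentiableOn ℂ g Ω₂ ∧ Set.MapsTo g Ω₂ Ω₁ ∧
      (∀ z ∈ Ω₁, g (f z) = z) ∧ (∀ w ∈ Ω₂, f (g w) = w)

/-- `f` is an automorphism of `Ω`. -/
def IsAutomorphismOf (Ω : Set (ℂ × ℂ)) (f : ℂ × ℂ → ℂ × ℂ) : Prop :=
  IsBiholoOn Ω Ω f

/-- Mixed Wirtinger derivative `H_{j,q̄}`. -/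
def Hmix (m : ℕ) (a : ℕ → ℂ) (j q : ℕ) (z : ℂ) : ℂ :=
  ∑ k ∈ (Finset.Icc j (2 * m - 1)).filter (fun k => q ≤ 2 * m - k),
    a (2 * m - k) * (k.descFactorial j : ℂ) * ((2 * m - k).descFactorial q : ℂ) *
      z ^ (k - j) * (starRingEnd ℂ z) ^ (2 * m - k - q)

/-- Holomorphic Wirtinger derivative `H_j`. -/
def Hhol (m : ℕ) (a : ℕ → ℂ) (j : ℕ) (z : ℂ) : ℂ :=
  ∑ k ∈ Finset.Icc j (2 * m - 1),
    a (2 * m - k) * (k.descFactorial j : ℂ) * z ^ (k - j) * (starRingEnd ℂ z) ^ (2 * m - k)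

/-- `ε(a) = |Re a₂ + H(a₁)|`. -/
def epsAt (H : ℂ → ℝ) (p : ℂ × ℂ) : ℝ := |p.2.re + H p.1|

/-- The `(j,q)` coefficient of the rescaled polynomial `H_{a,τ}`. -/
def scaledCoeff (m : ℕ) (a : ℕ → ℂ) (H : ℂ → ℝ) (p : ℂ × ℂ) (τ : ℝ) (j q : ℕ) : ℂ :=
  Hmix m a j q p.1 * (τ : ℂ) ^ (j + q) /
    ((j.factorial : ℂ) * (q.factorial : ℂ) * (epsAt H p : ℂ))

/-- Index pairs `(j,q)` with `j, q ≥ 1` and `j + q ≤ 2m`. -/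
def coeffPairs (m : ℕ) : Finset (ℕ × ℕ) :=
  (Finset.Icc 1 (2 * m) ×ˢ Finset.Icc 1 (2 * m)).filter (fun jq => jq.1 + jq.2 ≤ 2 * m)

/-- `‖H_{a,τ}‖`, the maximum modulus of the coefficients of the rescaled polynomial. -/
def HscaledNorm (m : ℕ) (a : ℕ → ℂ) (H : ℂ → ℝ) (p : ℂ × ℂ) (τ : ℝ) : ℝ :=
  (((coeffPairs m).sup fun jq =>
    Real.toNNReal (‖scaledCoeff m a H p τ jq.1 jq.2‖)) : ℝ≥0)

/-- Vanishing order at `0 ∈ ℂ` of a map, via big-O estimates. -/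
def vOrder {E : Type*} [NormedAddCommGroup E] (u : ℂ → E) : ℝ≥0∞ :=
  sSup {c : ℝ≥0∞ | ∃ k : ℕ, c = (k : ℝ≥0∞) ∧ u =O[𝓝 (0 : ℂ)] fun z : ℂ => ‖z‖ ^ k}

/-- The D'Angelo type of `∂M_H` at `p`. -/
def dAngeloType (H : ℂ → ℝ) (p : ℂ × ℂ) : ℝ≥0∞ :=
  ⨆ (γ : ℂ → ℂ × ℂ) (_ : ∃ r > 0, DifferentiableOn ℂ γ (Metric.ball 0 r) ∧
      γ 0 = p ∧ ¬ ∀ z ∈ Metric.ball (0 : ℂ) r, γ z = p),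
    vOrder (fun t => ((γ t).2.re + H (γ t).1 : ℝ)) / vOrder (fun t => γ t - p)

/-!
The coefficient of `z^{j₀} conj(z)^{q₀}` in the rescaled polynomial has modulus at most
`‖H_{η,τ}‖ = 1`, which gives `c |η₁|^{2m-j₀-q₀} τ^{j₀+q₀} ≤ j₀! q₀! ε`. Raised to the power `2m`
and divided by `ε^{j₀+q₀}`, this bounds `(τ / ε^{1/2m})^{2m(j₀+q₀)}` by a constant multiple of
`(ε / |η₁|^{2m})^{2m-j₀-q₀}`, which tends to `0` by tangential convergence.
-/

lemma le_coe_sup_toNNReal {ι : Type*} {s : Finset ι} {f : ι → ℝ} {i : ι} (hi : i ∈ s) :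
    f i ≤ ((s.sup fun i => (f i).toNNReal : ℝ≥0) : ℝ) :=
  (Real.le_coe_toNNReal _).trans
    (NNReal.coe_le_coe.2 (Finset.le_sup (f := fun i => (f i).toNNReal) hi))

lemma Filter.Tendsto.of_pow_nhds_zero {ι : Type*} {l : Filter ι} {f : ι → ℝ} {N : ℕ}
    (hf : ∀ i, 0 ≤ f i) (hN : N ≠ 0) (h : Tendsto (fun i => f i ^ N) l (𝓝 0)) :
    Tendsto f l (𝓝 0) := by
  have h' := h.rpow_const (p := (N : ℝ)⁻¹) (Or.inr (by positivity))
  rw [Real.zero_rpow (by positivity)] at h'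
  exact h'.congr fun i => Real.pow_rpow_inv_natCast (hf i) hN

lemma epsAt_pos_of_mem_modelM {H : ℂ → ℝ} {p : ℂ × ℂ} (hp : p ∈ modelM H) : 0 < epsAt H p :=
  abs_pos.2 hp.ne

lemma norm_scaledCoeff (m : ℕ) (a : ℕ → ℂ) (H : ℂ → ℝ) (p : ℂ × ℂ) (τ : ℝ) (j q : ℕ) :
    ‖scaledCoeff m a H p τ j q‖ =
      ‖Hmix m a j q p.1‖ * |τ| ^ (j + q) / (j.factorial * q.factorial * epsAt H p) := by
  simp only [scaledCoeff, norm_div, norm_mul, norm_pow, Complex.norm_real, Real.norm_eq_abs,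
    Complex.norm_natCast, abs_abs, epsAt]

lemma norm_Hmix_mul_pow_le {m : ℕ} {a : ℕ → ℂ} {H : ℂ → ℝ} {p : ℂ × ℂ} {τ : ℝ} {j q : ℕ}
    (hp : 0 < epsAt H p) (hτ : HscaledNorm m a H p τ ≤ 1) (hjq : (j, q) ∈ coeffPairs m) :
    ‖Hmix m a j q p.1‖ * |τ| ^ (j + q) ≤ j.factorial * q.factorial * epsAt H p := by
  have hcoeff : ‖scaledCoeff m a H p τ j q‖ ≤ 1 :=
    (le_coe_sup_toNNReal (f := fun jq : ℕ × ℕ => ‖scaledCoeff m a H p τ jq.1 jq.2‖) hjq).trans hτ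
  rwa [norm_scaledCoeff, div_le_one (by positivity)] at hcoeff

lemma tendsto_div_rpow_of_pow_mul_pow_le {τ ε A : ℕ → ℝ} {s t d : ℕ} {K : ℝ}
    (hd : s + t = d) (hs : s ≠ 0) (ht : t ≠ 0)
    (hτ : ∀ n, 0 ≤ τ n) (hε : ∀ n, 0 < ε n) (hA : ∀ n, 0 < A n)
    (hbound : ∀ n, τ n ^ s * A n ^ t ≤ K * ε n)
    (hlim : Tendsto (fun n => ε n / A n ^ d) atTop (𝓝 0)) :
    Tendsto (fun n => τ n / ε n ^ ((1 : ℝ) / d)) atTop (𝓝 0) := by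
  have hd0 : d ≠ 0 := by omega
  have hr : ∀ n, 0 ≤ τ n / ε n ^ ((1 : ℝ) / d) := fun n =>
    div_nonneg (hτ n) (Real.rpow_nonneg (hε n).le _)
  refine Tendsto.of_pow_nhds_zero hr (mul_ne_zero hs hd0)
    (squeeze_zero (fun n => pow_nonneg (hr n) _) (fun n => ?_)
      (by simpa [ht] using (hlim.pow t).const_mul (K ^ d)))
  have hτs : τ n ^ s ≤ K * ε n / A n ^ t := by
    rw [le_div_iff₀ (pow_pos (hA n) t)]
    exact hbound n
  calc (τ n / ε n ^ ((1 : ℝ) / d)) ^ (s * d) = (τ n ^ s) ^ d / ε n ^ s := by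
        rw [div_pow, pow_mul, mul_comm s d, pow_mul (ε n ^ _), one_div,
          Real.rpow_inv_natCast_pow (hε n).le hd0]
    _ ≤ (K * ε n / A n ^ t) ^ d / ε n ^ s := by
        have := hτ n
        have := hε n
        gcongr
    _ = K ^ d * (ε n / A n ^ d) ^ t := by
        have := (hε n).ne'
        have := (hA n).ne'
        subst hd
        field_simp
        ring

lemma tendsto_pow_div_of_tendsto_div_rpow {τ ε : ℕ → ℝ} {d : ℕ} (hd : d ≠ 0)
    (hε : ∀ n, 0 < ε n) (h : Tendsto (fun n => τ n / ε n ^ ((1 : ℝ) / d)) atTop (𝓝 0)) :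
    Tendsto (fun n => τ n ^ d / ε n) atTop (𝓝 0) := by
  have h' := h.pow d
  rw [zero_pow hd] at h'
  refine h'.congr fun n => ?_
  rw [div_pow, one_div, Real.rpow_inv_natCast_pow (hε n).le hd]

theorem statement_17_general (m : ℕ) (a : ℕ → ℂ) (H : ℂ → ℝ)
    (η : ℕ → ℂ × ℂ) (hη : ∀ n, η n ∈ modelM H)
    (hη1 : ∀ n, (η n).1 ≠ 0)
    (hratio : Filter.Tendsto (fun n => epsAt H (η n) / ‖(η n).1‖ ^ (2 * m))
      Filter.atTop (𝓝 0))
    (j₀ q₀ : ℕ) (hj₀ : 1 ≤ j₀) (hq₀ : 1 ≤ q₀) (hj₀q₀ : j₀ + q₀ < 2 * m)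
    (c C : ℝ) (hc : 0 < c)
    (hcomp : ∀ n, c * ‖(η n).1‖ ^ (2 * m - j₀ - q₀) ≤
        ‖Hmix m a j₀ q₀ (η n).1‖ ∧
      ‖Hmix m a j₀ q₀ (η n).1‖ ≤
        C * ‖(η n).1‖ ^ (2 * m - j₀ - q₀))
    (τn : ℕ → ℝ) (hτ : ∀ n, 0 < τn n ∧ HscaledNorm m a H (η n) (τn n) = 1) :
    Filter.Tendsto (fun n => τn n / epsAt H (η n) ^ ((1 : ℝ) / (2 * (m : ℝ))))
      Filter.atTop (𝓝 0) ∧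
    ∀ j ∈ Finset.Icc 1 (2 * m - 1),
      Filter.Tendsto (fun n => a (2 * m - j) * ((τn n : ℝ) : ℂ) ^ (2 * m) /
          ((epsAt H (η n) : ℝ) : ℂ))
        Filter.atTop (𝓝 0) := by
  have hε n : 0 < epsAt H (η n) := epsAt_pos_of_mem_modelM (hη n)
  have hjq : (j₀, q₀) ∈ coeffPairs m := by
    simp only [coeffPairs, Finset.mem_filter, Finset.mem_product, Finset.mem_Icc]
    omega
  have hbound n : τn n ^ (j₀ + q₀) * ‖(η n).1‖ ^ (2 * m - j₀ - q₀) ≤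
      j₀.factorial * q₀.factorial / c * epsAt H (η n) := by
    have h := norm_Hmix_mul_pow_le (hε n) (hτ n).2.le hjq
    rw [abs_of_pos (hτ n).1] at h
    rw [div_mul_eq_mul_div, le_div_iff₀ hc]
    nlinarith [(hcomp n).1, pow_pos (hτ n).1 (j₀ + q₀)]
  have hm : (2 * (m : ℝ)) = ((2 * m : ℕ) : ℝ) := by push_cast; ring
  rw [hm]
  have hτε : Tendsto (fun n => τn n / epsAt H (η n) ^ ((1 : ℝ) / ((2 * m : ℕ) : ℝ)))
      atTop (𝓝 0) :=
    tendsto_div_rpow_of_pow_mul_pow_le (by omega) (by omega) (by omega) (fun n => (hτ n).1.le)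
      hε (fun n => norm_pos_iff.2 (hη1 n)) hbound hratio
  refine ⟨hτε, fun j _ => ?_⟩
  have hcoeff := (Complex.continuous_ofReal.tendsto 0).comp
    (tendsto_pow_div_of_tendsto_div_rpow (by omega) hε hτε) |>.const_mul (a (2 * m - j))
  simpa [mul_div_assoc] using hcoeff

/-- along a sequence converging tangentially to order `> 2m`, if some mixed
derivative of order `< 2m` is comparable to `|η_{n,1}|^{2m−j₀−q₀}`, then
`τ(η_n) = o(ε(η_n)^{1/2m})` and the top-degree rescaled coefficients tend to `0`. -/
theorem statement_17 (m : ℕ) (hm : 1 ≤ m) (a : ℕ → ℂ) (H : ℂ → ℝ)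
    (hH : ∀ z : ℂ, (H z : ℂ) = Hpoly m a z)
    (hgood : GoodCoeff m a) (hsub : SubharmonicCoeff m a)
    (hnorm : (((Finset.Icc 1 (2 * m - 1)).sup fun j =>
      Real.toNNReal (‖a j‖)) : ℝ≥0) = 1)
    (η : ℕ → ℂ × ℂ) (hη : ∀ n, η n ∈ modelM H)
    (hηlim : Filter.Tendsto η Filter.atTop (𝓝 ((0 : ℂ), (0 : ℂ))))
    (hη1 : ∀ n, (η n).1 ≠ 0)
    (hratio : Filter.Tendsto (fun n => epsAt H (η n) / ‖(η n).1‖ ^ (2 * m))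
      Filter.atTop (𝓝 0))
    (j₀ q₀ : ℕ) (hj₀ : 1 ≤ j₀) (hq₀ : 1 ≤ q₀) (hj₀q₀ : j₀ + q₀ < 2 * m)
    (c C : ℝ) (hc : 0 < c) (hC : 0 < C)
    (hcomp : ∀ n, c * ‖(η n).1‖ ^ (2 * m - j₀ - q₀) ≤
        ‖Hmix m a j₀ q₀ (η n).1‖ ∧
      ‖Hmix m a j₀ q₀ (η n).1‖ ≤
        C * ‖(η n).1‖ ^ (2 * m - j₀ - q₀))
    (τn : ℕ → ℝ) (hτ : ∀ n, 0 < τn n ∧ HscaledNorm m a H (η n) (τn n) = 1) :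
    Filter.Tendsto (fun n => τn n / epsAt H (η n) ^ ((1 : ℝ) / (2 * (m : ℝ))))
      Filter.atTop (𝓝 0) ∧
    ∀ j ∈ Finset.Icc 1 (2 * m - 1),
      Filter.Tendsto (fun n => a (2 * m - j) * ((τn n : ℝ) : ℂ) ^ (2 * m) /
          ((epsAt H (η n) : ℝ) : ℂ))
        Filter.atTop (𝓝 0) :=
  statement_17_general m a H η hη hη1 hratio j₀ q₀ hj₀ hq₀ hj₀q₀ c C hc hcomp τn hτ

end
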